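/- arXiv:1910.07420 — 2 statements merged into one kernel-verified Lean document; each statement's English description precedes it below -/
import Mathlib

section
/- Let $A, B \in [0,1]$ with $A + B \le 1$, let $d \ge 2$ and $1 \le \tau \le d-1$. Define $C = 1 - (1-A)^{d-1} + \sum_{i=0}^{\tau-1} \binom{d-1}{i} B^i (1-A-B)^{d-1-i}$ and $D = \sum_{j=\tau}^{d-1} \binom{d-1}{j} A^j (1-A-B)^{d-1-j}$. Then $0 \le D \le C$. -/
/-!
Write `x = 1 - A - B` and `n = d - 1`. Since `1 - A = B + x`, the binomial theorem turns `C` into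
`1 - ∑_{i ≥ τ} binom(n,i) Bⁱ xⁿ⁻ⁱ`, while `D = ∑_{j ≥ τ} binom(n,j) Aʲ xⁿ⁻ʲ`.
For `j ≥ 1` we have `Aʲ + Bʲ ≤ (A + B)ʲ`, so `D + (1 - C)` is at most the upper tail of the
binomial expansion of `((A + B) + x)ⁿ = 1`.
-/

open Finset

section BinomialTail

variable {R : Type*}

theorem add_pow_eq_sum_range_add_sum_Icc [CommSemiring R] (a x : R) (n τ : ℕ) :
    (a + x) ^ n = ∑ i ∈ range τ, (n.choose i : R) * a ^ i * x ^ (n - i) +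
      ∑ i ∈ Icc τ n, (n.choose i : R) * a ^ i * x ^ (n - i) := by
  have hdisj : Disjoint (range τ) (Icc τ n) :=
    disjoint_left.2 fun i hi hi' => by simp only [mem_range, mem_Icc] at hi hi'; omega
  rw [← sum_union hdisj, add_pow]
  refine (sum_subset (fun i hi => ?_) fun i _ hi => ?_).trans (sum_congr rfl fun i _ => by ring)
  · simp only [mem_union, mem_range, mem_Icc] at hi ⊢; omega
  · rw [Nat.choose_eq_zero_of_lt (by simpa [Nat.lt_succ_iff] using hi)]; simp

variable [CommSemiring R] [PartialOrder R] [IsOrderedRing R]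

theorem sum_Icc_choose_mul_pow_le_add_pow {a x : R} (ha : 0 ≤ a) (hx : 0 ≤ x) (n τ : ℕ) :
    ∑ i ∈ Icc τ n, (n.choose i : R) * a ^ i * x ^ (n - i) ≤ (a + x) ^ n := by
  rw [add_pow_eq_sum_range_add_sum_Icc a x n τ]
  exact le_add_of_nonneg_left (sum_nonneg fun i _ => by positivity)

theorem sum_Icc_choose_mul_pow_add_le {a b x : R} (ha : 0 ≤ a) (hb : 0 ≤ b) (hx : 0 ≤ x)
    (n : ℕ) {τ : ℕ} (hτ : 1 ≤ τ) :
    ∑ i ∈ Icc τ n, (n.choose i : R) * a ^ i * x ^ (n - i) +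
        ∑ i ∈ Icc τ n, (n.choose i : R) * b ^ i * x ^ (n - i) ≤
      ∑ i ∈ Icc τ n, (n.choose i : R) * (a + b) ^ i * x ^ (n - i) := by
  rw [← sum_add_distrib]
  refine sum_le_sum fun i hi => ?_
  have hi0 : i ≠ 0 := by simp only [mem_Icc] at hi; omega
  calc (n.choose i : R) * a ^ i * x ^ (n - i) + (n.choose i : R) * b ^ i * x ^ (n - i)
      = (n.choose i : R) * (a ^ i + b ^ i) * x ^ (n - i) := by ring
    _ ≤ (n.choose i : R) * (a + b) ^ i * x ^ (n - i) := by
      gcongr; exact pow_add_pow_le ha hb hi0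

end BinomialTail

theorem stmt_3_general (A B : ℝ) (hA : A ∈ Set.Icc (0:ℝ) 1) (hB : B ∈ Set.Icc (0:ℝ) 1)
    (hAB : A + B ≤ 1) (d τ : ℕ) (hτ : 1 ≤ τ)
    (C D : ℝ)
    (hC : C = 1 - (1 - A) ^ (d - 1) + ∑ i ∈ Finset.range τ,
      (Nat.choose (d - 1) i : ℝ) * B ^ i * (1 - A - B) ^ (d - 1 - i))
    (hD : D = ∑ j ∈ Finset.Icc τ (d - 1),
      (Nat.choose (d - 1) j : ℝ) * A ^ j * (1 - A - B) ^ (d - 1 - j)) :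
    0 ≤ D ∧ D ≤ C := by
  have hx : 0 ≤ 1 - A - B := by linarith
  have hC' : C = 1 - ∑ i ∈ Icc τ (d - 1),
      (Nat.choose (d - 1) i : ℝ) * B ^ i * (1 - A - B) ^ (d - 1 - i) := by
    have h := add_pow_eq_sum_range_add_sum_Icc B (1 - A - B) (d - 1) τ
    rw [show B + (1 - A - B) = 1 - A by ring] at h
    rw [hC, h]; ring
  have htail := sum_Icc_choose_mul_pow_add_le hA.1 hB.1 hx (d - 1) hτ
  have hfull := sum_Icc_choose_mul_pow_le_add_pow (add_nonneg hA.1 hB.1) hx (d - 1) τ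
  rw [show A + B + (1 - A - B) = 1 by ring, one_pow] at hfull
  have hD0 : 0 ≤ D := hD ▸ sum_nonneg fun j _ =>
    mul_nonneg (mul_nonneg (Nat.cast_nonneg _) (pow_nonneg hA.1 _)) (pow_nonneg hx _)
  exact ⟨hD0, by linarith⟩

theorem stmt_3 (A B : ℝ) (hA : A ∈ Set.Icc (0:ℝ) 1) (hB : B ∈ Set.Icc (0:ℝ) 1)
    (hAB : A + B ≤ 1) (d τ : ℕ) (hd : 2 ≤ d) (hτ : 1 ≤ τ) (hτ' : τ ≤ d - 1)
    (C D : ℝ)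
    (hC : C = 1 - (1 - A) ^ (d - 1) + ∑ i ∈ Finset.range τ,
      (Nat.choose (d - 1) i : ℝ) * B ^ i * (1 - A - B) ^ (d - 1 - i))
    (hD : D = ∑ j ∈ Finset.Icc τ (d - 1),
      (Nat.choose (d - 1) j : ℝ) * A ^ j * (1 - A - B) ^ (d - 1 - j)) :
    0 ≤ D ∧ D ≤ C :=
  stmt_3_general A B hA hB hAB d τ hτ C D hC hD
end

section
/- Let $n \ge 1$, let $f : \{0,1\}^{n-1} \to \{0,1\}$ be any Boolean function, and define $\mathcal{V}(b_1,\ldots,b_n) = (f(b_1,\ldots,b_{n-1}) \wedge f_{even}(b_1,\ldots,b_n)) \vee f_{odd}(b_1,\ldots,b_n)$, where $f_{even}$ (resp. $f_{odd}$) indicates even (resp. odd) parity of $\sum_{i=1}^n b_i$. Then the set $\mathcal{M} = \{B : \mathcal{V}(B)=1\}$ satisfies: $|\mathcal{M}| > 2^{n-1}$ if and only if there exists $(b_1,\ldots,b_{n-1})$ with $f(b_1,\ldots,b_{n-1}) = 1$. -/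
/-!
Split a word `b ∈ 𝔽₂ⁿ` into its first `n - 1` letters and its parity `∑ bᵢ`; this is a bijection
because the last letter is recovered as the parity minus the sum of the others. Under it the valid
words are all words of odd parity (`2^(n-1)` of them) together with the even-parity words whose
prefix satisfies `f`, one for each such prefix. Hence `|𝓜| = 2^(n-1) + |f⁻¹(1)|`.
-/

open Finset

def Fin.initSumEquiv (G : Type*) [AddCommGroup G] (m : ℕ) :
    (Fin (m + 1) → G) ≃ (Fin m → G) × G where
  toFun b := (Fin.init b, ∑ i, b i)
  invFun p := Fin.snoc p.1 (p.2 - ∑ i, p.1 i)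
  left_inv b := by
    simp only [Fin.sum_univ_castSucc, Fin.init, add_sub_cancel_left]
    exact Fin.snoc_init_self b
  right_inv p := by
    ext i
    · simp [Fin.init_snoc]
    · simp only [Fin.sum_univ_castSucc, Fin.snoc_castSucc, Fin.snoc_last, add_sub_cancel]

theorem card_subtype_and_eq_zero_or_eq_one {α : Type*} [Fintype α] (f : α → Bool) :
    Fintype.card {p : α × ZMod 2 // ((f p.1 && decide (p.2 = 0)) || decide (p.2 = 1)) = true}
      = Fintype.card {a // f a = true} + Fintype.card α := by
  have sum_zmod_two (g : ZMod 2 → ℕ) : ∑ s, g s = g 0 + g 1 := Fin.sum_univ_two g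
  simp only [Fintype.card_subtype, card_filter, Fintype.sum_prod_type, sum_zmod_two,
    zero_ne_one, one_ne_zero, decide_false, decide_true, Bool.and_true, Bool.and_false,
    Bool.or_false, Bool.or_true, if_true, sum_add_distrib, card_univ, sum_const, smul_eq_mul,
    mul_one]

theorem card_subtype_init_and_sum_eq_zero_or_sum_eq_one (m : ℕ) (f : (Fin m → ZMod 2) → Bool) :
    Fintype.card {b : Fin (m + 1) → ZMod 2 //
        ((f (Fin.init b) && decide ((∑ i, b i) = 0)) || decide ((∑ i, b i) = 1)) = true}
      = Fintype.card {a // f a = true} + 2 ^ m := by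
  refine (Fintype.card_congr ((Fin.initSumEquiv (ZMod 2) m).subtypeEquiv
      (q := fun p => ((f p.1 && decide (p.2 = 0)) || decide (p.2 = 1)) = true)
      fun _ => .rfl)).trans ?_
  rw [card_subtype_and_eq_zero_or_eq_one, Fintype.card_fun, ZMod.card, Fintype.card_fin]

theorem stmt_6 (n : ℕ) (hn : 1 ≤ n) (f : (Fin (n - 1) → ZMod 2) → Bool)
    (V : (Fin n → ZMod 2) → Bool)
    (hV : ∀ b : Fin n → ZMod 2,
      V b = ((f (fun i => b (Fin.castLE (Nat.sub_le n 1) i)) && decide ((∑ i, b i) = 0))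
             || decide ((∑ i, b i) = 1))) :
    Fintype.card {B : Fin n → ZMod 2 // V B = true} > 2 ^ (n - 1)
      ↔ ∃ b : Fin (n - 1) → ZMod 2, f b = true := by
  obtain ⟨m, rfl⟩ : ∃ m, n = m + 1 := Nat.exists_eq_add_of_le' hn
  have hcard : Fintype.card {B // V B = true} = Fintype.card {a // f a = true} + 2 ^ m := by
    simp only [hV]
    exact card_subtype_init_and_sum_eq_zero_or_sum_eq_one m f
  change _ > 2 ^ m ↔ _
  rw [hcard, gt_iff_lt, Nat.lt_add_left_iff_pos, Fintype.card_pos_iff,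
    nonempty_subtype]
end
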